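/- arXiv:1812.00274 — 3 statements merged into one kernel-verified Lean document; each statement's English description precedes it below -/
import Mathlib

section
/- Let n ∈ ℕ, let V ⊆ ℝ^n be a set, let d ≥ 1, r ≥ 0, and let T and S be d-tensors over V. If σ(T) = σ(S), then σ(Stk^r(T)) = σ(Stk^r(S)). -/
/-!
Stacking commutes with symmetrization in the sense that `σ(Stk^r(σ T)) = σ(Stk^r T)`:
a permutation `τ` of the first `d` slots extends to a permutation of all `d + r` slots,
so averaging over `Sym(d + r)` already absorbs the inner average over `Sym(d)`.
Hence `σ(Stk^r T)` depends on `T` only through `σ T`.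
-/

noncomputable section

/-- The `r`-stack of a `d`-tensor `T` over `α`: `Stk^r(T)(u, w) = T(u)`. -/
def stk {α : Type*} (d r : ℕ) (T : (Fin d → α) → ℝ) : (Fin (d + r) → α) → ℝ :=
  fun v => T fun i => v (Fin.castAdd r i)

/-- The symmetrization of a `d`-tensor:
`σ(T)(v) = (1/d!) ∑_{π ∈ Sym(d)} T(v ∘ π)`. -/
def tsym {α : Type*} (d : ℕ) (T : (Fin d → α) → ℝ) : (Fin d → α) → ℝ :=
  fun v => (d.factorial : ℝ)⁻¹ * ∑ π : Equiv.Perm (Fin d), T (v ∘ π)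

theorem sum_perm_comp_castAdd_comp_perm {α M : Type*} [AddCommMonoid M] {d r : ℕ}
    (U : (Fin d → α) → M) (v : Fin (d + r) → α) (τ : Equiv.Perm (Fin d)) :
    ∑ π : Equiv.Perm (Fin (d + r)), U (v ∘ π ∘ Fin.castAdd r ∘ τ) =
      ∑ π : Equiv.Perm (Fin (d + r)), U (v ∘ π ∘ Fin.castAdd r) := by
  refine Fintype.sum_equiv (Equiv.mulRight (τ.viaFintypeEmbedding (Fin.castAddEmb r))) _ _
    fun π => congrArg U (funext fun i => ?_)
  exact congrArg (v ∘ π) (τ.viaFintypeEmbedding_apply_image (Fin.castAddEmb r) i).symm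

theorem tsym_stk_tsym {α : Type*} (d r : ℕ) (T : (Fin d → α) → ℝ) :
    tsym (d + r) (stk d r (tsym d T)) = tsym (d + r) (stk d r T) := by
  funext v
  simp only [tsym, stk]
  congr 1
  have hfac : (d.factorial : ℝ) ≠ 0 := Nat.cast_ne_zero.mpr d.factorial_ne_zero
  calc ∑ π : Equiv.Perm (Fin (d + r)), (d.factorial : ℝ)⁻¹ *
          ∑ τ : Equiv.Perm (Fin d), T (v ∘ π ∘ Fin.castAdd r ∘ τ)
      = (d.factorial : ℝ)⁻¹ * ∑ τ : Equiv.Perm (Fin d),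
          ∑ π : Equiv.Perm (Fin (d + r)), T (v ∘ π ∘ Fin.castAdd r ∘ τ) := by
        rw [← Finset.mul_sum, Finset.sum_comm]
    _ = (d.factorial : ℝ)⁻¹ * ((d.factorial : ℝ) *
          ∑ π : Equiv.Perm (Fin (d + r)), T (v ∘ π ∘ Fin.castAdd r)) := by
        simp only [sum_perm_comp_castAdd_comp_perm, Finset.sum_const, Finset.card_univ,
          Fintype.card_perm, Fintype.card_fin, nsmul_eq_mul]
    _ = ∑ π : Equiv.Perm (Fin (d + r)), T (v ∘ π ∘ Fin.castAdd r) :=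
        inv_mul_cancel_left₀ hfac _

theorem stmt0_general (n : ℕ) (V : Set (Fin n → ℝ)) (d r : ℕ)
    (T S : (Fin d → V) → ℝ)
    (h : tsym d T = tsym d S) :
    tsym (d + r) (stk d r T) = tsym (d + r) (stk d r S) := by
  rw [← tsym_stk_tsym, h, tsym_stk_tsym]

/-- if `σ(T) = σ(S)` then `σ(Stk^r T) = σ(Stk^r S)`. -/
theorem stmt0 (n : ℕ) (V : Set (Fin n → ℝ)) (d r : ℕ) (hd : 1 ≤ d)
    (T S : (Fin d → V) → ℝ)
    (h : tsym d T = tsym d S) :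
    tsym (d + r) (stk d r T) = tsym (d + r) (stk d r S) :=
  stmt0_general n V d r T S h
end
end

section
/- For every n ≥ 1, every r ∈ ℕ and every symmetric matrix M ∈ S^n, the following are equivalent: (i) there exist symmetric n×n matrices N_β with all entries nonnegative and symmetric positive semidefinite n×n matrices S_β, indexed by β ∈ ℕ^n with |β| = β_1+⋯+β_n = r, such that (∑_{i=1}^n x_i)^r (∑_{i,j} M_{ij} x_i x_j) = ∑_{|β|=r} x^β (xᵀ N_β x) + ∑_{|β|=r} x^β (xᵀ S_β x) as polynomials in x_1,…,x_n, where x^β := x_1^{β_1}⋯x_n^{β_n}; (ii) there exist a nonnegative (r+2)-tensor N over [n] and a 2-PSD (r+2)-tensor S over [n] such that σ(Stk^r(M)) = σ(N) + σ(S). In other words, Q_r^n = Q_r^{[n]}. -/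
noncomputable section

open MvPolynomial

/-- A symmetric `n × n` matrix identified with a `2`-tensor over `[n]`. -/
def matTensor {n : ℕ} (M : Matrix (Fin n) (Fin n) ℝ) : (Fin 2 → Fin n) → ℝ :=
  fun v => M (v 0) (v 1)

/-- An `(r+2)`-tensor `S` over `[n]` is 2-PSD if for every `z ∈ [n]^r` the
matrix `(i,j) ↦ S(i,j,z)` is symmetric positive semidefinite. -/
def Is2PSDFin {n r : ℕ} (S : (Fin (2 + r) → Fin n) → ℝ) : Prop :=
  ∀ z : Fin r → Fin n,
    Matrix.PosSemidef (Matrix.of fun i j : Fin n => S (Fin.append ![i, j] z))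

/-!
Identify a `d`-tensor `T` over `ι` with the form `p_T = ∑_v T(v) x_{v_1} ⋯ x_{v_d}`. The sum
`∑_π T(v ∘ π)` only sees the coefficient of `p_T` at the exponent of `v` (orbit–stabilizer), so
`σ(T) = σ(T')` iff `p_T = p_{T'}`; and `p` of the `r`-stack of `M` is `(∑ x_i)^r xᵀ M x`.
Grouping the terms of `p_A` for an `(r+2)`-tensor `A` by the exponent `β` of the last `r` indices
gives `p_A = ∑_β x^β xᵀ A_β x`, where the block matrix `A_β` sums the slices `A(·, ·, z)` with
exponent `β`. Blocks of a nonnegative (2-PSD) tensor are nonnegative (PSD), and symmetrizing a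
block does not change its form. Conversely, spreading each `B_β` evenly over the `z` of exponent
`β` gives a tensor with blocks `B_β`, nonnegative (2-PSD) when the `B_β` are.
-/

open Finset MvPolynomial

namespace Tensor

variable {ι : Type*} {d r : ℕ}

def exponent (v : Fin d → ι) : ι →₀ ℕ := ∑ k, Finsupp.single (v k) 1

lemma prod_X_eq_monomial_exponent {R : Type*} [CommSemiring R] (v : Fin d → ι) :
    ∏ k, (X (v k) : MvPolynomial ι R) = monomial (exponent v) 1 :=
  (monomial_sum_one _ _).symm

lemma exponent_apply [DecidableEq ι] (v : Fin d → ι) (a : ι) :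
    exponent v a = #{k | v k = a} := by
  simp only [exponent, Finsupp.finsetSum_apply, Finsupp.single_apply]
  rw [card_filter]

lemma exponent_comp_perm (v : Fin d → ι) (π : Equiv.Perm (Fin d)) :
    exponent (v ∘ π) = exponent v :=
  Equiv.sum_comp π fun k => Finsupp.single (v k) 1

lemma exponent_eq_toFinsupp [DecidableEq ι] (v : Fin d → ι) :
    exponent v = Multiset.toFinsupp (List.ofFn v) := by
  ext a
  simp [exponent_apply, Multiset.toFinsupp_apply, ← Fin.univ_val_map, Multiset.count_map,
    Finset.card, Finset.filter_val, eq_comm]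

lemma exponent_mem_finsuppAntidiag [Fintype ι] [DecidableEq ι] (v : Fin d → ι) :
    exponent v ∈ finsuppAntidiag univ d := by
  rw [mem_finsuppAntidiag, ← Finsupp.degree_eq_sum, exponent, map_sum]
  simp [Finsupp.degree_single]

lemma exists_exponent_eq [Fintype ι] [DecidableEq ι] {β : ι →₀ ℕ}
    (hβ : β ∈ finsuppAntidiag univ d) : ∃ v : Fin d → ι, exponent v = β := by
  set l := (Finsupp.toMultiset β).toList
  have hl : l.length = d := by
    simpa [l, Finsupp.card_toMultiset, Finsupp.sum_fintype] using hβ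
  subst hl
  exact ⟨l.get, by
    rw [exponent_eq_toFinsupp, List.ofFn_get, Multiset.coe_toList, Finsupp.toMultiset_toFinsupp]⟩

lemma exists_perm_comp_eq_of_exponent_eq [DecidableEq ι] {v w : Fin d → ι}
    (h : exponent v = exponent w) : ∃ π : Equiv.Perm (Fin d), v ∘ π = w := by
  have e : ∀ a, {k // w k = a} ≃ {k // v k = a} := fun a =>
    Fintype.equivOfCardEq <| by
      simp only [Fintype.card_subtype, ← exponent_apply, h]
  exact ⟨Equiv.ofFiberEquiv e, funext fun k => Equiv.ofFiberEquiv_map e k⟩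

lemma card_perm_comp_eq [DecidableEq ι] {v w : Fin d → ι} (h : exponent w = exponent v) :
    #{π : Equiv.Perm (Fin d) | v ∘ π = w} = #{π : Equiv.Perm (Fin d) | v ∘ π = v} := by
  obtain ⟨π₀, rfl⟩ := exists_perm_comp_eq_of_exponent_eq h.symm
  refine card_equiv (Equiv.mulRight π₀⁻¹) fun π => ?_
  simp only [mem_filter, mem_univ, true_and, Equiv.coe_mulRight, Equiv.Perm.coe_mul,
    Equiv.Perm.inv_def]
  exact (Equiv.comp_symm_eq π₀ v (v ∘ π)).symm

lemma tsym_eq_smul_sum {α : Type*} (T : (Fin d → α) → ℝ) :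
    tsym d T = (d.factorial : ℝ)⁻¹ • ∑ π : Equiv.Perm (Fin d), fun v => T (v ∘ π) := by
  ext v
  simp [tsym]

lemma tsym_add {α : Type*} (T T' : (Fin d → α) → ℝ) :
    tsym d (T + T') = tsym d T + tsym d T' := by
  ext v
  simp [tsym, sum_add_distrib, mul_add]

def symmPart (A : Matrix ι ι ℝ) : Matrix ι ι ℝ := (2⁻¹ : ℝ) • (A + A.transpose)

lemma isSymm_symmPart (A : Matrix ι ι ℝ) : (symmPart A).IsSymm := by
  simp [symmPart, Matrix.IsSymm, Matrix.transpose_add, add_comm]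

lemma symmPart_nonneg {A : Matrix ι ι ℝ} (hA : ∀ i j, 0 ≤ A i j) (i j : ι) :
    0 ≤ symmPart A i j := by
  have := hA i j
  have := hA j i
  simp only [symmPart, Matrix.smul_apply, Matrix.add_apply, Matrix.transpose_apply, smul_eq_mul]
  positivity

def slice (A : (Fin (2 + r) → ι) → ℝ) (z : Fin r → ι) : Matrix ι ι ℝ :=
  Matrix.of fun i j => A (Fin.append ![i, j] z)

section Fintype

variable [Fintype ι]

def toPoly (d : ℕ) : ((Fin d → ι) → ℝ) →ₗ[ℝ] MvPolynomial ι ℝ :=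
  Fintype.linearCombination ℝ fun v => ∏ k, X (v k)

lemma toPoly_apply (T : (Fin d → ι) → ℝ) :
    toPoly d T = ∑ v, monomial (exponent v) (T v) := by
  simp [toPoly, Fintype.linearCombination_apply, prod_X_eq_monomial_exponent, smul_monomial]

lemma toPoly_comp_perm (T : (Fin d → ι) → ℝ) (π : Equiv.Perm (Fin d)) :
    toPoly d (fun v => T (v ∘ π)) = toPoly d T := by
  simp only [toPoly_apply]
  exact Fintype.sum_equiv (π.symm.arrowCongr (Equiv.refl ι)) _ _ fun v => by
    show _ = monomial (exponent (v ∘ π)) (T (v ∘ π))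
    rw [exponent_comp_perm]

lemma toPoly_tsym (T : (Fin d → ι) → ℝ) :
    toPoly d (tsym d T) = toPoly d T := by
  rw [tsym_eq_smul_sum, map_smul, map_sum]
  simp only [toPoly_comp_perm, sum_const, card_univ, Fintype.card_perm, Fintype.card_fin]
  rw [← Nat.cast_smul_eq_nsmul ℝ, smul_smul,
    inv_mul_cancel₀ (Nat.cast_ne_zero.mpr d.factorial_ne_zero), one_smul]

def quadPoly : Matrix ι ι ℝ →ₗ[ℝ] MvPolynomial ι ℝ where
  toFun A := ∑ i, ∑ j, C (A i j) * X i * X j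
  map_add' A B := by simp [C_add, add_mul, sum_add_distrib]
  map_smul' c A := by simp [C_mul, smul_eq_C_mul, mul_sum, mul_assoc]

lemma quadPoly_apply (A : Matrix ι ι ℝ) : quadPoly A = ∑ i, ∑ j, C (A i j) * X i * X j := rfl

lemma quadPoly_transpose (A : Matrix ι ι ℝ) : quadPoly A.transpose = quadPoly A := by
  rw [quadPoly_apply, quadPoly_apply, sum_comm]
  simp only [Matrix.transpose_apply, mul_right_comm]

lemma quadPoly_symmPart (A : Matrix ι ι ℝ) : quadPoly (symmPart A) = quadPoly A := by
  rw [symmPart, map_smul, map_add, quadPoly_transpose, ← two_smul ℝ, smul_smul,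
    inv_mul_cancel₀ two_ne_zero, one_smul]

lemma toPoly_eq_sum_slice (A : (Fin (2 + r) → ι) → ℝ) :
    toPoly (2 + r) A = ∑ z, monomial (exponent z) 1 * quadPoly (slice A z) := by
  let e : (ι × ι) × (Fin r → ι) ≃ (Fin (2 + r) → ι) :=
    ((finTwoArrowEquiv ι).symm.prodCongr (Equiv.refl _)).trans (Fin.appendEquiv 2 r)
  rw [toPoly, Fintype.linearCombination_apply, ← e.sum_comp, Fintype.sum_prod_type_right]
  refine sum_congr rfl fun z _ => ?_
  rw [Fintype.sum_prod_type, quadPoly_apply, mul_sum]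
  refine sum_congr rfl fun i _ => ?_
  rw [mul_sum]
  refine sum_congr rfl fun j _ => ?_
  show A (Fin.append ![i, j] z) • ∏ k, X (Fin.append ![i, j] z k) = _
  rw [Fin.prod_univ_add]
  simp only [Fin.append_left, Fin.append_right, Fin.prod_univ_two, Matrix.cons_val_zero,
    Matrix.cons_val_one]
  rw [prod_X_eq_monomial_exponent, smul_eq_C_mul, slice, Matrix.of_apply]
  ring

lemma toPoly_stk {n : ℕ} (M : Matrix (Fin n) (Fin n) ℝ) :
    toPoly (2 + r) (stk 2 r (matTensor M)) = (∑ i, X i) ^ r * quadPoly M := by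
  have hslice (z : Fin r → Fin n) : slice (stk 2 r (matTensor M)) z = M := by
    ext i j
    simp [slice, stk, matTensor]
  simp [toPoly_eq_sum_slice, hslice, Fintype.sum_pow, sum_mul, prod_X_eq_monomial_exponent]

variable [DecidableEq ι]

lemma coeff_toPoly (T : (Fin d → ι) → ℝ) (m : ι →₀ ℕ) :
    (toPoly d T).coeff m = ∑ v with exponent v = m, T v := by
  simp [toPoly_apply, coeff_sum, coeff_monomial, sum_filter]

/-- Orbit–stabilizer: the orbit of `v` under `Sym(d)` consists of the tuples with the same
exponent, and each of them is hit by a coset of the stabilizer. -/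
lemma sum_perm_comp_eq (T : (Fin d → ι) → ℝ) (v : Fin d → ι) :
    ∑ π : Equiv.Perm (Fin d), T (v ∘ π) =
      #{π : Equiv.Perm (Fin d) | v ∘ π = v} * (toPoly d T).coeff (exponent v) := by
  rw [coeff_toPoly, mul_sum, ← sum_fiberwise_of_maps_to (s := univ)
    (t := {w | exponent w = exponent v}) (g := fun π : Equiv.Perm (Fin d) => v ∘ ⇑π)
    (by simp [exponent_comp_perm]) (fun π => T (v ∘ π))]
  refine sum_congr rfl fun w hw => ?_
  rw [sum_congr rfl fun π hπ => by rw [(mem_filter.mp hπ).2], sum_const,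
    card_perm_comp_eq (mem_filter.mp hw).2, nsmul_eq_mul]

lemma tsym_eq_tsym_iff {T T' : (Fin d → ι) → ℝ} :
    tsym d T = tsym d T' ↔ toPoly d T = toPoly d T' := by
  refine ⟨fun h => by rw [← toPoly_tsym T, h, toPoly_tsym], fun h => ?_⟩
  ext v
  simp only [tsym, sum_perm_comp_eq, h]

lemma tsym_eq_tsym_add_tsym_iff {T N S : (Fin d → ι) → ℝ} :
    (tsym d T = fun v => tsym d N v + tsym d S v) ↔
      toPoly d T = toPoly d N + toPoly d S := by
  rw [← map_add, ← tsym_eq_tsym_iff, tsym_add]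
  rfl

def blockMatrix (A : (Fin (2 + r) → ι) → ℝ) (β : ι →₀ ℕ) : Matrix ι ι ℝ :=
  ∑ z with exponent z = β, slice A z

lemma toPoly_eq_sum_blockMatrix (A : (Fin (2 + r) → ι) → ℝ) :
    toPoly (2 + r) A =
      ∑ β ∈ finsuppAntidiag univ r, monomial β 1 * quadPoly (blockMatrix A β) := by
  rw [toPoly_eq_sum_slice,
    ← sum_fiberwise_of_maps_to fun z _ => exponent_mem_finsuppAntidiag z]
  refine sum_congr rfl fun β _ => ?_
  rw [blockMatrix, map_sum, mul_sum]
  exact sum_congr rfl fun z hz => by rw [(mem_filter.mp hz).2]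

lemma blockMatrix_nonneg {A : (Fin (2 + r) → ι) → ℝ} (hA : ∀ v, 0 ≤ A v) (β : ι →₀ ℕ)
    (i j : ι) : 0 ≤ blockMatrix A β i j := by
  simp only [blockMatrix, Matrix.sum_apply]
  exact sum_nonneg fun z _ => hA _

lemma posSemidef_blockMatrix {n : ℕ} {A : (Fin (2 + r) → Fin n) → ℝ} (hA : Is2PSDFin A)
    (β : Fin n →₀ ℕ) : (blockMatrix A β).PosSemidef :=
  Matrix.posSemidef_sum _ fun z _ => hA z

def spread (B : (ι →₀ ℕ) → Matrix ι ι ℝ) (v : Fin (2 + r) → ι) : ℝ :=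
  let z : Fin r → ι := fun k => v (Fin.natAdd 2 k)
  (#{z' : Fin r → ι | exponent z' = exponent z} : ℝ)⁻¹ *
    B (exponent z) (v (Fin.castAdd r 0)) (v (Fin.castAdd r 1))

lemma slice_spread (B : (ι →₀ ℕ) → Matrix ι ι ℝ) (z : Fin r → ι) :
    slice (spread B) z =
      (#{z' : Fin r → ι | exponent z' = exponent z} : ℝ)⁻¹ • B (exponent z) := by
  ext i j
  simp [slice, spread]

lemma blockMatrix_spread (B : (ι →₀ ℕ) → Matrix ι ι ℝ) {β : ι →₀ ℕ}
    (hβ : β ∈ finsuppAntidiag univ r) : blockMatrix (spread (r := r) B) β = B β := by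
  obtain ⟨z₀, hz₀⟩ := exists_exponent_eq hβ
  have hcard : (#{z : Fin r → ι | exponent z = β} : ℝ) ≠ 0 :=
    Nat.cast_ne_zero.mpr (card_ne_zero_of_mem (mem_filter.mpr ⟨mem_univ _, hz₀⟩))
  rw [blockMatrix, sum_congr rfl fun z hz => by rw [slice_spread, (mem_filter.mp hz).2],
    sum_const, ← Nat.cast_smul_eq_nsmul ℝ, smul_smul, mul_inv_cancel₀ hcard, one_smul]

lemma toPoly_spread (B : (ι →₀ ℕ) → Matrix ι ι ℝ) :
    toPoly (2 + r) (spread B) =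
      ∑ β ∈ finsuppAntidiag univ r, monomial β 1 * quadPoly (B β) := by
  rw [toPoly_eq_sum_blockMatrix]
  exact sum_congr rfl fun β hβ => by rw [blockMatrix_spread B hβ]

lemma spread_nonneg {B : (ι →₀ ℕ) → Matrix ι ι ℝ}
    (hB : ∀ β ∈ finsuppAntidiag univ r, ∀ i j, 0 ≤ B β i j) (v : Fin (2 + r) → ι) :
    0 ≤ spread B v :=
  mul_nonneg (by positivity) (hB _ (exponent_mem_finsuppAntidiag _) _ _)

lemma is2PSDFin_spread {n : ℕ} {B : (Fin n →₀ ℕ) → Matrix (Fin n) (Fin n) ℝ}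
    (hB : ∀ β ∈ finsuppAntidiag univ r, (B β).PosSemidef) : Is2PSDFin (spread (r := r) B) :=
  fun z => by
    show (slice (spread B) z).PosSemidef
    rw [slice_spread]
    exact (hB _ (exponent_mem_finsuppAntidiag z)).smul (by positivity)

end Fintype

end Tensor

open Tensor

theorem stmt2_general (n : ℕ) (r : ℕ) (M : Matrix (Fin n) (Fin n) ℝ) :
    (∃ N S : (Fin n →₀ ℕ) → Matrix (Fin n) (Fin n) ℝ,
      (∀ β ∈ Finset.finsuppAntidiag (Finset.univ : Finset (Fin n)) r,
        (N β).IsSymm ∧ (∀ i j, 0 ≤ N β i j) ∧ (S β).PosSemidef) ∧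
      (∑ i : Fin n, X i) ^ r *
          (∑ i : Fin n, ∑ j : Fin n, C (M i j) * X i * X j) =
        (∑ β ∈ Finset.finsuppAntidiag (Finset.univ : Finset (Fin n)) r,
          monomial β 1 * ∑ i : Fin n, ∑ j : Fin n, C (N β i j) * X i * X j) +
        ∑ β ∈ Finset.finsuppAntidiag (Finset.univ : Finset (Fin n)) r,
          monomial β 1 * ∑ i : Fin n, ∑ j : Fin n, C (S β i j) * X i * X j) ↔
    (∃ N S : (Fin (2 + r) → Fin n) → ℝ,
      (∀ v, 0 ≤ N v) ∧ Is2PSDFin S ∧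
      tsym (2 + r) (stk 2 r (matTensor M)) =
        fun v => tsym (2 + r) N v + tsym (2 + r) S v) := by
  simp only [tsym_eq_tsym_add_tsym_iff, toPoly_stk, ← quadPoly_apply]
  constructor
  · rintro ⟨N, S, hNS, h⟩
    refine ⟨spread N, spread S, spread_nonneg fun β hβ => (hNS β hβ).2.1,
      is2PSDFin_spread fun β hβ => (hNS β hβ).2.2, ?_⟩
    rw [toPoly_spread, toPoly_spread, h]
  · rintro ⟨N, S, hN, hS, h⟩
    refine ⟨fun β => symmPart (blockMatrix N β), blockMatrix S,
      fun β _ => ⟨isSymm_symmPart _, symmPart_nonneg (blockMatrix_nonneg hN β),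
        posSemidef_blockMatrix hS β⟩, ?_⟩
    simpa only [toPoly_eq_sum_blockMatrix, quadPoly_symmPart] using h

/-- `Q_r^n = Q_r^{[n]}`. -/
theorem stmt2 (n : ℕ) (hn : 1 ≤ n) (r : ℕ) (M : Matrix (Fin n) (Fin n) ℝ)
    (hM : M.IsSymm) :
    (∃ N S : (Fin n →₀ ℕ) → Matrix (Fin n) (Fin n) ℝ,
      (∀ β ∈ Finset.finsuppAntidiag (Finset.univ : Finset (Fin n)) r,
        (N β).IsSymm ∧ (∀ i j, 0 ≤ N β i j) ∧ (S β).PosSemidef) ∧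
      (∑ i : Fin n, X i) ^ r *
          (∑ i : Fin n, ∑ j : Fin n, C (M i j) * X i * X j) =
        (∑ β ∈ Finset.finsuppAntidiag (Finset.univ : Finset (Fin n)) r,
          monomial β 1 * ∑ i : Fin n, ∑ j : Fin n, C (N β i j) * X i * X j) +
        ∑ β ∈ Finset.finsuppAntidiag (Finset.univ : Finset (Fin n)) r,
          monomial β 1 * ∑ i : Fin n, ∑ j : Fin n, C (S β i j) * X i * X j) ↔
    (∃ N S : (Fin (2 + r) → Fin n) → ℝ,
      (∀ v, 0 ≤ N v) ∧ Is2PSDFin S ∧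
      tsym (2 + r) (stk 2 r (matTensor M)) =
        fun v => tsym (2 + r) N v + tsym (2 + r) S v) :=
  stmt2_general n r M
end
end

section
/- Let n ∈ ℕ and let V ⊆ ℝ^n be a nonempty compact set. A kernel M on V belongs to int COP(V) if and only if there exists ε > 0 such that for every k ≥ 1, all v_1, …, v_k ∈ V and all x in the standard simplex Δ^k = {x ∈ ℝ^k : x_i ≥ 0 for all i, ∑_{i=1}^k x_i = 1}, one has ∑_{i,j=1}^k M(v_i,v_j) x_i x_j ≥ ε. -/
noncomputable section

open Filter Topology

/-- A symmetric two-variable function identified with a `2`-tensor. -/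
def kerTensor {X : Type*} (K : X → X → ℝ) : (Fin 2 → X) → ℝ :=
  fun v => K (v 0) (v 1)

/-- A kernel: a continuous symmetric real-valued function of two variables. -/
def IsKernel {X : Type*} [TopologicalSpace X] (K : X → X → ℝ) : Prop :=
  Continuous (fun p : X × X => K p.1 p.2) ∧ ∀ x y, K x y = K y x

/-- Positive semidefiniteness of a two-variable function. -/
def IsPSDKernel {X : Type*} (K : X → X → ℝ) : Prop :=
  ∀ (k : ℕ) (v : Fin k → X) (x : Fin k → ℝ),
    0 ≤ ∑ i, ∑ j, K (v i) (v j) * x i * x j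

/-- Copositivity of a two-variable function. -/
def IsCopositiveKernel {X : Type*} (K : X → X → ℝ) : Prop :=
  ∀ (k : ℕ) (v : Fin k → X) (x : Fin k → ℝ), (∀ i, 0 ≤ x i) →
    0 ≤ ∑ i, ∑ j, K (v i) (v j) * x i * x j

/-- An `(r+2)`-tensor `S` is 2-PSD if it is continuous and every slice
`(x, y) ↦ S(x, y, z)` is a PSD kernel. -/
def Is2PSD {X : Type*} [TopologicalSpace X] (r : ℕ)
    (S : (Fin (2 + r) → X) → ℝ) : Prop :=
  Continuous S ∧ ∀ z : Fin r → X, IsPSDKernel fun x y => S (Fin.append ![x, y] z)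

/-- The tensor condition defining `C_r`: `σ(Stk^r M) = σ(N)` for some
nonnegative `(r+2)`-tensor `N`. -/
def CrCond {X : Type*} (r : ℕ) (M : X → X → ℝ) : Prop :=
  ∃ N : (Fin (2 + r) → X) → ℝ, (∀ v, 0 ≤ N v) ∧
    tsym (2 + r) (stk 2 r (kerTensor M)) = tsym (2 + r) N

/-- Membership in `C_r`: a kernel satisfying the `C_r` tensor condition. -/
def memCr {X : Type*} [TopologicalSpace X] (r : ℕ) (M : X → X → ℝ) : Prop :=
  IsKernel M ∧ CrCond r M

/-- Membership in `Q_r`: a kernel `M` with `σ(Stk^r M) = σ(N) + σ(S)` for some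
nonnegative `(r+2)`-tensor `N` and 2-PSD `(r+2)`-tensor `S`. -/
def memQr {X : Type*} [TopologicalSpace X] (r : ℕ) (M : X → X → ℝ) : Prop :=
  IsKernel M ∧ ∃ N S : (Fin (2 + r) → X) → ℝ, (∀ v, 0 ≤ N v) ∧ Is2PSD r S ∧
    tsym (2 + r) (stk 2 r (kerTensor M)) =
      fun v => tsym (2 + r) N v + tsym (2 + r) S v

/-- The space of kernels on `V`, i.e. symmetric continuous functions on
`V × V`, with the topology of `C(V × V, ℝ)` (for `V` compact this is the
supremum-norm topology). -/
def KernelSpace {n : ℕ} (V : Set (Fin n → ℝ)) : Type _ :=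
  {K : C(↥V × ↥V, ℝ) // ∀ x y, K (x, y) = K (y, x)}

instance {n : ℕ} (V : Set (Fin n → ℝ)) : TopologicalSpace (KernelSpace V) :=
  instTopologicalSpaceSubtype

/-- `COP(V)` as a subset of the space of kernels on `V`. -/
def COPSet {n : ℕ} (V : Set (Fin n → ℝ)) : Set (KernelSpace V) :=
  {K | IsCopositiveKernel fun x y => K.1 (x, y)}

section QuadraticSums

variable {ι : Type*} [Fintype ι]

lemma sum_sum_sub_const_mul (g : ι → ι → ℝ) (c : ℝ) (x : ι → ℝ) :
    ∑ i, ∑ j, (g i j - c) * x i * x j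
      = ∑ i, ∑ j, g i j * x i * x j - c * (∑ i, x i) ^ 2 := by
  rw [sq, Finset.sum_mul_sum, Finset.mul_sum]
  simp only [Finset.mul_sum, ← Finset.sum_sub_distrib]
  exact Finset.sum_congr rfl fun i _ => Finset.sum_congr rfl fun j _ => by ring

lemma sum_sum_smul_mul_smul (g : ι → ι → ℝ) (t : ℝ) (x : ι → ℝ) :
    ∑ i, ∑ j, g i j * (t • x) i * (t • x) j = t ^ 2 * ∑ i, ∑ j, g i j * x i * x j := by
  simp only [Finset.mul_sum, Pi.smul_apply, smul_eq_mul]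
  exact Finset.sum_congr rfl fun i _ => Finset.sum_congr rfl fun j _ => by ring

end QuadraticSums

section Copositivity

variable {X : Type*}

lemma IsCopositiveKernel.mono {K L : X → X → ℝ} (hK : IsCopositiveKernel K)
    (hKL : ∀ a b, K a b ≤ L a b) : IsCopositiveKernel L := fun k v x hx =>
  (hK k v x hx).trans <| Finset.sum_le_sum fun i _ => Finset.sum_le_sum fun j _ =>
    mul_le_mul_of_nonneg_right (mul_le_mul_of_nonneg_right (hKL _ _) (hx i)) (hx j)

/-- On the simplex the constant kernel `c` contributes exactly `c`, and both quadratic forms are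
homogeneous of degree two. -/
lemma isCopositiveKernel_sub_const_iff {K : X → X → ℝ} {c : ℝ} :
    IsCopositiveKernel (fun a b => K a b - c) ↔
      ∀ (k : ℕ), 1 ≤ k → ∀ (v : Fin k → X) (x : Fin k → ℝ),
        (∀ i, 0 ≤ x i) → (∑ i, x i = 1) → c ≤ ∑ i, ∑ j, K (v i) (v j) * x i * x j := by
  constructor
  · intro hK k _ v x hx hsum
    have := hK k v x hx
    rw [sum_sum_sub_const_mul (fun i j => K (v i) (v j)), hsum] at this
    linarith
  · intro hK k v x hx
    rcases eq_or_ne x 0 with rfl | hx0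
    · simp
    obtain ⟨i₀, hi₀⟩ := Function.ne_iff.mp hx0
    rw [sum_sum_sub_const_mul (fun i j => K (v i) (v j))]
    set s := ∑ i, x i
    have hs : 0 < s := (lt_of_le_of_ne (hx i₀) (Ne.symm hi₀)).trans_le
      (Finset.single_le_sum (fun i _ => hx i) (Finset.mem_univ i₀))
    set y := s⁻¹ • x
    have hy : c ≤ ∑ i, ∑ j, K (v i) (v j) * y i * y j :=
      hK k i₀.pos v y (fun i => smul_nonneg (inv_nonneg.2 hs.le) (hx i))
        (by simp [y, ← Finset.mul_sum, s, inv_mul_cancel₀ hs.ne'])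
    have hxy : x = s • y := by simp [y, smul_smul, mul_inv_cancel₀ hs.ne']
    have hQ : ∑ i, ∑ j, K (v i) (v j) * x i * x j
        = s ^ 2 * ∑ i, ∑ j, K (v i) (v j) * y i * y j := by
      rw [hxy, sum_sum_smul_mul_smul]
    rw [hQ]
    nlinarith [mul_nonneg (sq_nonneg s) (sub_nonneg.2 hy)]

end Copositivity

section KernelSpace

variable {n : ℕ} {V : Set (Fin n → ℝ)} [CompactSpace V]

lemma KernelSpace.mem_interior_iff {S : Set (KernelSpace V)} {M : KernelSpace V} :
    M ∈ interior S ↔ ∃ ε, 0 < ε ∧ ∀ K : KernelSpace V, dist K.1 M.1 < ε → K ∈ S := by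
  have hnhds : 𝓝 M = comap Subtype.val (𝓝 M.1) := nhds_induced _ _
  rw [mem_interior_iff_mem_nhds, hnhds]
  exact (Metric.nhds_basis_ball.comap _).mem_iff

lemma KernelSpace.mem_interior_COPSet_iff {M : KernelSpace V} :
    M ∈ interior (COPSet V) ↔
      ∃ ε, 0 < ε ∧ IsCopositiveKernel fun a b => M.1 (a, b) - ε := by
  rw [KernelSpace.mem_interior_iff]
  constructor
  · rintro ⟨ε, hε, hball⟩
    let K : KernelSpace V :=
      ⟨M.1 - ContinuousMap.const _ (ε / 2), fun a b => by simp [M.2 a b]⟩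
    have hK : dist K.1 M.1 ≤ ε / 2 :=
      (ContinuousMap.dist_le (by positivity)).2 fun p => by
        simp [K, abs_of_pos hε]
    exact ⟨ε / 2, by positivity, hball K (by linarith)⟩
  · rintro ⟨ε, hε, hM⟩
    refine ⟨ε, hε, fun K hK => ?_⟩
    show IsCopositiveKernel fun a b => K.1 (a, b)
    refine hM.mono fun a b => ?_
    have := (ContinuousMap.dist_apply_le_dist (a, b)).trans_lt hK
    rw [Real.dist_eq, abs_lt] at this
    linarith

end KernelSpace

theorem stmt7_general (n : ℕ) (V : Set (Fin n → ℝ))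
    (hVc : IsCompact V) (M : KernelSpace V) :
    M ∈ interior (COPSet V) ↔
      ∃ ε : ℝ, 0 < ε ∧ ∀ (k : ℕ), 1 ≤ k → ∀ (v : Fin k → ↥V) (x : Fin k → ℝ),
        (∀ i, 0 ≤ x i) → (∑ i, x i = 1) →
        ε ≤ ∑ i, ∑ j, M.1 (v i, v j) * x i * x j := by
  have : CompactSpace V := isCompact_iff_compactSpace.mp hVc
  rw [KernelSpace.mem_interior_COPSet_iff]
  exact exists_congr fun ε => and_congr_right fun _ => isCopositiveKernel_sub_const_iff

/-- a kernel `M` lies in `int COP(V)` iff there is `ε > 0` such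
that `∑_{i,j} M(v_i, v_j) x_i x_j ≥ ε` for all `k ≥ 1`, `v ∈ V^k` and `x` in
the standard simplex `Δ^k`. -/
theorem stmt7 (n : ℕ) (V : Set (Fin n → ℝ)) (hVne : V.Nonempty)
    (hVc : IsCompact V) (M : KernelSpace V) :
    M ∈ interior (COPSet V) ↔
      ∃ ε : ℝ, 0 < ε ∧ ∀ (k : ℕ), 1 ≤ k → ∀ (v : Fin k → ↥V) (x : Fin k → ℝ),
        (∀ i, 0 ≤ x i) → (∑ i, x i = 1) →
        ε ≤ ∑ i, ∑ j, M.1 (v i, v j) * x i * x j :=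
  stmt7_general n V hVc M
end
end
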